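/- arXiv:2205.10244 — 2 statements merged into one kernel-verified Lean document; each statement's English description precedes it below -/
import Mathlib

section
/- For s ≥ 0 there exists a constant C_s > 0 such that for all u, v ∈ H^s(𝕋), ‖(I−∂_x²)^{−1}∂_x(uv)‖_{H^s(𝕋)} ≤ C_s ‖u‖_{H^s(𝕋)} ‖v‖_{H^s(𝕋)}. -/
open scoped BigOperators

/-- `H^s(𝕋)` norm of a function given by its sequence of Fourier coefficients. -/
noncomputable def hsNorm (s : ℝ) (u : ℤ → ℂ) : ℝ :=
  Real.sqrt (∑' k : ℤ, (1 + (k : ℝ) ^ 2) ^ s * ‖u k‖ ^ 2)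

/-- The Fourier multiplier `(I − ∂ₓ²)⁻¹ ∂ₓ`, with symbol `ik/(1+k²)`. -/
noncomputable def smoothDeriv (u : ℤ → ℂ) : ℤ → ℂ :=
  fun k => (Complex.I * (k : ℂ) / (1 + (k : ℂ) ^ 2)) * u k

/-- Convolution of Fourier coefficient sequences: the Fourier coefficients of the
product `uv` of the corresponding functions. -/
noncomputable def fourierConv (u v : ℤ → ℂ) : ℤ → ℂ :=
  fun k => ∑' j : ℤ, u j * v (k - j)

private lemma summable_mul_of_sq {f g : ℤ → ℝ} (hf0 : ∀ k, 0 ≤ f k) (hg0 : ∀ k, 0 ≤ g k)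
    (hf : Summable (fun k => f k ^ 2)) (hg : Summable (fun k => g k ^ 2)) :
    Summable (fun k => f k * g k) := by
  refine ((hf.add hg).div_const 2).of_nonneg_of_le (fun k => mul_nonneg (hf0 k) (hg0 k))
    (fun k => ?_)
  nlinarith [sq_nonneg (f k - g k)]

private lemma tsum_mul_le_sqrt {f g : ℤ → ℝ} (hf0 : ∀ k, 0 ≤ f k) (hg0 : ∀ k, 0 ≤ g k)
    (hf : Summable (fun k => f k ^ 2)) (hg : Summable (fun k => g k ^ 2)) :
    ∑' k, f k * g k ≤ Real.sqrt (∑' k, f k ^ 2) * Real.sqrt (∑' k, g k ^ 2) := by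
  refine Summable.tsum_le_of_sum_le (summable_mul_of_sq hf0 hg0 hf hg) (fun F => ?_)
  calc ∑ k ∈ F, f k * g k
      ≤ Real.sqrt (∑ k ∈ F, f k ^ 2) * Real.sqrt (∑ k ∈ F, g k ^ 2) :=
        Real.sum_mul_le_sqrt_mul_sqrt F f g
    _ ≤ _ := by
        gcongr
        · exact Summable.sum_le_tsum F (fun k _ => sq_nonneg _) hf
        · exact Summable.sum_le_tsum F (fun k _ => sq_nonneg _) hg

private lemma one_le_weight (s : ℝ) (hs : 0 ≤ s) (k : ℤ) : (1:ℝ) ≤ (1 + (k:ℝ)^2) ^ s := by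
  have : (1:ℝ) ≤ 1 + (k:ℝ)^2 := by nlinarith [sq_nonneg ((k:ℝ))]
  calc (1:ℝ) = 1 ^ s := (Real.one_rpow s).symm
    _ ≤ (1 + (k:ℝ)^2) ^ s := Real.rpow_le_rpow zero_le_one this hs

private lemma sq_summable_of_weight {s : ℝ} (hs : 0 ≤ s) {u : ℤ → ℂ}
    (hu : Summable (fun k : ℤ => (1 + (k : ℝ) ^ 2) ^ s * ‖u k‖ ^ 2)) :
    Summable (fun k : ℤ => ‖u k‖ ^ 2) :=
  hu.of_nonneg_of_le (fun k => sq_nonneg _)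
    (fun k => le_mul_of_one_le_left (sq_nonneg _) (one_le_weight s hs k))

private lemma weight_ineq (s : ℝ) (hs : 0 ≤ s) (k j : ℤ) :
    (1 + (k:ℝ)^2) ^ (s/2) ≤
      2 ^ (s/2) * ((1 + (j:ℝ)^2) ^ (s/2) * (1 + ((k - j : ℤ):ℝ)^2) ^ (s/2)) := by
  have h2 : (0:ℝ) ≤ s/2 := by linarith
  have hbase : (1 + (k:ℝ)^2) ≤ 2 * (1 + (j:ℝ)^2) * (1 + ((k - j : ℤ):ℝ)^2) := by
    push_cast
    nlinarith [sq_nonneg ((j:ℝ) - ((k:ℝ) - j)), sq_nonneg ((j:ℝ) * ((k:ℝ) - j)),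
      sq_nonneg ((j:ℝ) + ((k:ℝ) - j)), sq_nonneg ((k:ℝ) - j), sq_nonneg (j:ℝ)]
  calc (1 + (k:ℝ)^2) ^ (s/2)
      ≤ (2 * (1 + (j:ℝ)^2) * (1 + ((k - j : ℤ):ℝ)^2)) ^ (s/2) :=
        Real.rpow_le_rpow (by positivity) hbase h2
    _ = 2 ^ (s/2) * ((1 + (j:ℝ)^2) ^ (s/2) * (1 + ((k - j : ℤ):ℝ)^2) ^ (s/2)) := by
        rw [Real.mul_rpow (by positivity) (by positivity),
          Real.mul_rpow (by positivity) (by positivity)]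
        ring

private lemma rpow_half_sq (s : ℝ) (x : ℝ) (hx : 0 ≤ x) : (x ^ (s/2)) ^ 2 = x ^ s := by
  rw [← Real.rpow_natCast (x ^ (s/2)) 2, ← Real.rpow_mul hx]
  norm_num

/-- Roumégoux's bilinear estimate: for `s ≥ 0` there is `C_s > 0` such that
`‖(I−∂ₓ²)⁻¹∂ₓ(uv)‖_{H^s} ≤ C_s ‖u‖_{H^s} ‖v‖_{H^s}` for all `u, v ∈ H^s(𝕋)`
(expressed via Fourier coefficients, where the product becomes a convolution). -/
theorem roumegoux_bilinear_estimate (s : ℝ) (hs : 0 ≤ s) :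
    ∃ C : ℝ, 0 < C ∧ ∀ u v : ℤ → ℂ,
      Summable (fun k : ℤ => (1 + (k : ℝ) ^ 2) ^ s * ‖u k‖ ^ 2) →
      Summable (fun k : ℤ => (1 + (k : ℝ) ^ 2) ^ s * ‖v k‖ ^ 2) →
      hsNorm s (smoothDeriv (fourierConv u v)) ≤ C * hsNorm s u * hsNorm s v := by
  -- the summable "smoothing" weight
  have hS : Summable (fun k : ℤ => (k:ℝ)^2 / (1 + (k:ℝ)^2)^2) := by
    refine (Real.summable_one_div_int_pow.mpr one_lt_two).of_nonneg_of_le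
      (fun k => by positivity) (fun k => ?_)
    rcases eq_or_ne k 0 with rfl | hk
    · simp
    · have hk1 : (1:ℝ) ≤ (k:ℝ)^2 := by
        have h1 : (1:ℤ) ≤ k^2 := by
          rcases lt_or_gt_of_ne hk with h | h <;> nlinarith
        exact_mod_cast h1
      rw [div_le_div_iff₀ (by positivity) (by nlinarith)]
      nlinarith [sq_nonneg ((k:ℝ))]
  set S : ℝ := ∑' k : ℤ, (k:ℝ)^2 / (1 + (k:ℝ)^2)^2 with hSdef
  have hSpos : 0 < S := by
    have h1 : (1:ℝ)^2 / (1 + (1:ℝ)^2)^2 ≤ S := by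
      have := Summable.le_tsum hS 1 (fun k _ => by positivity)
      simpa using this
    norm_num at h1
    linarith
  refine ⟨Real.sqrt (2 ^ s * S), Real.sqrt_pos.mpr (by positivity), fun u v hu hv => ?_⟩
  set A := hsNorm s u with hA
  set B := hsNorm s v with hB
  have hA0 : 0 ≤ A := Real.sqrt_nonneg _
  have hB0 : 0 ≤ B := Real.sqrt_nonneg _
  -- ℓ² sequences
  set a : ℤ → ℝ := fun j => (1 + (j:ℝ)^2) ^ (s/2) * ‖u j‖ with ha
  set b : ℤ → ℝ := fun j => (1 + (j:ℝ)^2) ^ (s/2) * ‖v j‖ with hb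
  have ha0 : ∀ j, 0 ≤ a j := fun j => by positivity
  have hb0 : ∀ j, 0 ≤ b j := fun j => by positivity
  have hasq : ∀ j, a j ^ 2 = (1 + (j:ℝ)^2) ^ s * ‖u j‖ ^ 2 := fun j => by
    rw [ha]; rw [mul_pow, rpow_half_sq s _ (by positivity)]
  have hbsq : ∀ j, b j ^ 2 = (1 + (j:ℝ)^2) ^ s * ‖v j‖ ^ 2 := fun j => by
    rw [hb]; rw [mul_pow, rpow_half_sq s _ (by positivity)]
  have haS : Summable (fun j => a j ^ 2) := by simpa only [hasq] using hu
  have hbS : Summable (fun j => b j ^ 2) := by simpa only [hbsq] using hv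
  have htsa : Real.sqrt (∑' j, a j ^ 2) = A := by
    rw [hA, hsNorm]; congr 1; exact tsum_congr hasq
  -- shifted b sequence
  have hbshift : ∀ k : ℤ, Summable (fun j => b (k - j) ^ 2) := by
    intro k
    exact ((Equiv.subLeft k).summable_iff.mpr hbS).congr (fun j => by simp)
  have htsb : ∀ k : ℤ, Real.sqrt (∑' j, b (k - j) ^ 2) = B := by
    intro k
    have : ∑' j, b (k - j) ^ 2 = ∑' j, b j ^ 2 := by
      have := (Equiv.subLeft k).tsum_eq (fun j => b j ^ 2)
      simpa using this
    rw [this, hB, hsNorm]; congr 1; exact tsum_congr hbsq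
  -- summability of norm products
  have huS2 : Summable (fun j : ℤ => ‖u j‖ ^ 2) := sq_summable_of_weight hs hu
  have hvS2 : Summable (fun j : ℤ => ‖v j‖ ^ 2) := sq_summable_of_weight hs hv
  have hvshift2 : ∀ k : ℤ, Summable (fun j : ℤ => ‖v (k - j)‖ ^ 2) := by
    intro k
    exact ((Equiv.subLeft k).summable_iff.mpr hvS2).congr (fun j => by simp)
  have hprod : ∀ k : ℤ, Summable (fun j : ℤ => ‖u j‖ * ‖v (k - j)‖) := fun k =>
    summable_mul_of_sq (fun j => norm_nonneg _) (fun j => norm_nonneg _) huS2 (hvshift2 k)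
  have hwprod : ∀ k : ℤ, Summable (fun j : ℤ => a j * b (k - j)) := fun k =>
    summable_mul_of_sq ha0 (fun j => hb0 _) haS (hbshift k)
  set c : ℤ → ℂ := fourierConv u v with hc
  -- key pointwise estimate
  have key : ∀ k : ℤ, (1 + (k:ℝ)^2) ^ (s/2) * ‖c k‖ ≤ 2 ^ (s/2) * (A * B) := by
    intro k
    have h1 : ‖c k‖ ≤ ∑' j, ‖u j‖ * ‖v (k - j)‖ := by
      rw [hc]
      refine (norm_tsum_le_tsum_norm ?_).trans_eq (tsum_congr fun j => norm_mul _ _)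
      exact (hprod k).congr (fun j => (norm_mul _ _).symm)
    have h2 : (1 + (k:ℝ)^2) ^ (s/2) * ∑' j, ‖u j‖ * ‖v (k - j)‖
        ≤ ∑' j, 2 ^ (s/2) * (a j * b (k - j)) := by
      rw [← tsum_mul_left]
      refine Summable.tsum_le_tsum (fun j => ?_) ((hprod k).mul_left _) ((hwprod k).mul_left _)
      have hw := weight_ineq s hs k j
      calc (1 + (k:ℝ)^2) ^ (s/2) * (‖u j‖ * ‖v (k - j)‖)
          ≤ (2 ^ (s/2) * ((1 + (j:ℝ)^2) ^ (s/2) * (1 + ((k - j : ℤ):ℝ)^2) ^ (s/2)))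
            * (‖u j‖ * ‖v (k - j)‖) := by
            exact mul_le_mul_of_nonneg_right hw (by positivity)
        _ = 2 ^ (s/2) * (a j * b (k - j)) := by rw [ha, hb]; push_cast; ring
    have h3 : ∑' j, a j * b (k - j) ≤ A * B := by
      calc ∑' j, a j * b (k - j)
          ≤ Real.sqrt (∑' j, a j ^ 2) * Real.sqrt (∑' j, b (k - j) ^ 2) :=
            tsum_mul_le_sqrt ha0 (fun j => hb0 _) haS (hbshift k)
        _ = A * B := by rw [htsa, htsb k]
    calc (1 + (k:ℝ)^2) ^ (s/2) * ‖c k‖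
        ≤ (1 + (k:ℝ)^2) ^ (s/2) * ∑' j, ‖u j‖ * ‖v (k - j)‖ := by
          exact mul_le_mul_of_nonneg_left h1 (by positivity)
      _ ≤ ∑' j, 2 ^ (s/2) * (a j * b (k - j)) := h2
      _ = 2 ^ (s/2) * ∑' j, a j * b (k - j) := tsum_mul_left
      _ ≤ 2 ^ (s/2) * (A * B) := by
          exact mul_le_mul_of_nonneg_left h3 (by positivity)
  -- the multiplier norm
  have hmult : ∀ k : ℤ, ‖Complex.I * (k:ℂ) / (1 + (k:ℂ)^2)‖
      = |(k:ℝ)| / (1 + (k:ℝ)^2) := by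
    intro k
    have e1 : (1 + (k:ℂ)^2) = (((1 + (k:ℝ)^2) : ℝ) : ℂ) := by push_cast; ring
    have e2 : ((k:ℤ):ℂ) = (((k:ℝ)) : ℂ) := by push_cast; ring
    rw [e1, e2, norm_div, norm_mul, Complex.norm_I, one_mul, Complex.norm_real,
      Complex.norm_real, Real.norm_eq_abs, Real.norm_eq_abs,
      abs_of_pos (by positivity : (0:ℝ) < 1 + (k:ℝ)^2)]
  -- pointwise bound on the weighted square
  have term_bound : ∀ k : ℤ,
      (1 + (k:ℝ)^2) ^ s * ‖smoothDeriv c k‖ ^ 2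
        ≤ 2 ^ s * (A * B) ^ 2 * ((k:ℝ)^2 / (1 + (k:ℝ)^2)^2) := by
    intro k
    have hn : ‖smoothDeriv c k‖ = |(k:ℝ)| / (1 + (k:ℝ)^2) * ‖c k‖ := by
      rw [smoothDeriv, norm_mul, hmult k]
    have hk := key k
    have hsq : ((1 + (k:ℝ)^2) ^ (s/2) * ‖c k‖) ^ 2 ≤ (2 ^ (s/2) * (A * B)) ^ 2 := by
      have h0 : 0 ≤ (1 + (k:ℝ)^2) ^ (s/2) * ‖c k‖ := by positivity
      nlinarith
    have e1 : ((1 + (k:ℝ)^2) ^ (s/2) * ‖c k‖) ^ 2 = (1 + (k:ℝ)^2) ^ s * ‖c k‖ ^ 2 := by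
      rw [mul_pow, rpow_half_sq s _ (by positivity)]
    have e2 : ((2:ℝ) ^ (s/2) * (A * B)) ^ 2 = 2 ^ s * (A * B) ^ 2 := by
      rw [mul_pow, rpow_half_sq s 2 (by norm_num)]
    rw [e1, e2] at hsq
    have habs : |(k:ℝ)| ^ 2 = (k:ℝ)^2 := sq_abs _
    rw [hn, mul_pow, div_pow, habs]
    calc (1 + (k:ℝ)^2) ^ s * ((k:ℝ)^2 / (1 + (k:ℝ)^2)^2 * ‖c k‖ ^ 2)
        = ((k:ℝ)^2 / (1 + (k:ℝ)^2)^2) * ((1 + (k:ℝ)^2) ^ s * ‖c k‖ ^ 2) := by ring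
      _ ≤ ((k:ℝ)^2 / (1 + (k:ℝ)^2)^2) * (2 ^ s * (A * B) ^ 2) := by
          exact mul_le_mul_of_nonneg_left hsq (by positivity)
      _ = 2 ^ s * (A * B) ^ 2 * ((k:ℝ)^2 / (1 + (k:ℝ)^2)^2) := by ring
  -- sum up
  have hsumL : Summable (fun k : ℤ => (1 + (k:ℝ)^2) ^ s * ‖smoothDeriv c k‖ ^ 2) :=
    (hS.mul_left (2 ^ s * (A * B) ^ 2)).of_nonneg_of_le (fun k => by positivity) term_bound
  have htot : ∑' k : ℤ, (1 + (k:ℝ)^2) ^ s * ‖smoothDeriv c k‖ ^ 2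
      ≤ 2 ^ s * S * (A * B) ^ 2 := by
    calc ∑' k : ℤ, (1 + (k:ℝ)^2) ^ s * ‖smoothDeriv c k‖ ^ 2
        ≤ ∑' k : ℤ, 2 ^ s * (A * B) ^ 2 * ((k:ℝ)^2 / (1 + (k:ℝ)^2)^2) :=
          Summable.tsum_le_tsum term_bound hsumL (hS.mul_left _)
      _ = 2 ^ s * (A * B) ^ 2 * S := tsum_mul_left
      _ = 2 ^ s * S * (A * B) ^ 2 := by ring
  rw [hsNorm]
  calc Real.sqrt (∑' k : ℤ, (1 + (k:ℝ)^2) ^ s * ‖smoothDeriv c k‖ ^ 2)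
      ≤ Real.sqrt (2 ^ s * S * (A * B) ^ 2) := Real.sqrt_le_sqrt htot
    _ = Real.sqrt (2 ^ s * S) * (A * B) := by
        rw [Real.sqrt_mul (by positivity), Real.sqrt_sq (by positivity)]
    _ = Real.sqrt (2 ^ s * S) * A * B := by ring
end

section
/- For every s ∈ ℝ and t ∈ ℝ, the operator S(t) on X^s defined on Fourier coefficients by the matrix [[cos(ρ(k)t), (i/√(1+k²)) sin(ρ(k)t)], [i√(1+k²) sin(ρ(k)t), cos(ρ(k)t)]], where ρ(k)=|k|/√(1+k²), is a bounded linear operator from X^s to X^s; moreover there exists C ≥ 1 independent of t with ‖S(t)U‖_{X^s} ≤ C‖U‖_{X^s}. -/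
open scoped BigOperators

/-- `X^s = H^s(𝕋) × H^{s−1}(𝕋)` norm (via Fourier coefficients). -/
noncomputable def xsNorm (s : ℝ) (U : (ℤ → ℂ) × (ℤ → ℂ)) : ℝ :=
  Real.sqrt (hsNorm s U.1 ^ 2 + hsNorm (s - 1) U.2 ^ 2)

/-- `ρ(k) = |k|/√(1+k²) = √(k²/(1+k²))`. -/
noncomputable def rho (k : ℤ) : ℝ := |(k : ℝ)| / Real.sqrt (1 + (k : ℝ) ^ 2)

/-- The linear propagator `S(t)`, acting on each Fourier mode `k` through the matrix
`[[cos(ρ(k)t), (i/√(1+k²)) sin(ρ(k)t)], [i√(1+k²) sin(ρ(k)t), cos(ρ(k)t)]]`. -/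
noncomputable def Sflow (t : ℝ) (U : (ℤ → ℂ) × (ℤ → ℂ)) : (ℤ → ℂ) × (ℤ → ℂ) :=
  (fun k => (Real.cos (rho k * t) : ℂ) * U.1 k +
      Complex.I / (Real.sqrt (1 + (k : ℝ) ^ 2) : ℂ) * (Real.sin (rho k * t) : ℂ) * U.2 k,
   fun k => Complex.I * (Real.sqrt (1 + (k : ℝ) ^ 2) : ℂ) * (Real.sin (rho k * t) : ℂ) * U.1 k +
      (Real.cos (rho k * t) : ℂ) * U.2 k)

lemma norm_add_sq_le_two (a b : ℂ) : ‖a + b‖ ^ 2 ≤ 2 * ‖a‖ ^ 2 + 2 * ‖b‖ ^ 2 := by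
  have h := norm_add_le a b
  nlinarith [sq_nonneg (‖a‖ - ‖b‖), norm_nonneg a, norm_nonneg b, norm_nonneg (a + b), h]

/-- For every `s ∈ ℝ` and `t ∈ ℝ`, the propagator `S(t)` is a bounded linear operator
from `X^s` to `X^s`, with a bound `C ≥ 1` independent of `t`:
`‖S(t)U‖_{X^s} ≤ C ‖U‖_{X^s}`. -/
theorem Sflow_bounded :
    ∃ C : ℝ, 1 ≤ C ∧ ∀ (s t : ℝ) (U : (ℤ → ℂ) × (ℤ → ℂ)),
      Summable (fun k : ℤ => (1 + (k : ℝ) ^ 2) ^ s * ‖U.1 k‖ ^ 2) →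
      Summable (fun k : ℤ => (1 + (k : ℝ) ^ 2) ^ (s - 1) * ‖U.2 k‖ ^ 2) →
      xsNorm s (Sflow t U) ≤ C * xsNorm s U := by
  refine ⟨2, by norm_num, fun s t U hu hv => ?_⟩
  set f1 : ℤ → ℝ := fun k => (1 + (k : ℝ) ^ 2) ^ s * ‖U.1 k‖ ^ 2 with hf1
  set f2 : ℤ → ℝ := fun k => (1 + (k : ℝ) ^ 2) ^ (s - 1) * ‖U.2 k‖ ^ 2 with hf2
  have hw : ∀ k : ℤ, (0:ℝ) < 1 + (k:ℝ)^2 := fun k => by positivity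
  have hsqpos : ∀ k : ℤ, (0:ℝ) < Real.sqrt (1 + (k:ℝ)^2) := fun k => Real.sqrt_pos.2 (hw k)
  have hsq : ∀ k : ℤ, Real.sqrt (1 + (k:ℝ)^2) ^ 2 = 1 + (k:ℝ)^2 :=
    fun k => Real.sq_sqrt (hw k).le
  have hrw : ∀ k : ℤ, (1 + (k:ℝ)^2) ^ (s-1) = (1 + (k:ℝ)^2) ^ s / (1 + (k:ℝ)^2) := by
    intro k
    rw [Real.rpow_sub (hw k), Real.rpow_one]
  -- pointwise bounds
  have h1 : ∀ k : ℤ, (1 + (k:ℝ)^2) ^ s * ‖(Sflow t U).1 k‖ ^ 2 ≤ 2 * f1 k + 2 * f2 k := by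
    intro k
    have hb := norm_add_sq_le_two ((Real.cos (rho k * t) : ℂ) * U.1 k)
      (Complex.I / (Real.sqrt (1 + (k : ℝ) ^ 2) : ℂ) * (Real.sin (rho k * t) : ℂ) * U.2 k)
    have ha : ‖(Real.cos (rho k * t) : ℂ) * U.1 k‖ ^ 2 ≤ ‖U.1 k‖ ^ 2 := by
      rw [norm_mul, Complex.norm_real, Real.norm_eq_abs, mul_pow]
      have hc : |Real.cos (rho k * t)| ^ 2 ≤ 1 := by
        nlinarith [Real.abs_cos_le_one (rho k * t), abs_nonneg (Real.cos (rho k * t))]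
      calc |Real.cos (rho k * t)| ^ 2 * ‖U.1 k‖ ^ 2 ≤ 1 * ‖U.1 k‖ ^ 2 :=
            mul_le_mul_of_nonneg_right hc (sq_nonneg _)
        _ = ‖U.1 k‖ ^ 2 := one_mul _
    have hbnorm : ‖Complex.I / (Real.sqrt (1 + (k : ℝ) ^ 2) : ℂ) * (Real.sin (rho k * t) : ℂ) * U.2 k‖ ^ 2
        ≤ ‖U.2 k‖ ^ 2 / (1 + (k:ℝ)^2) := by
      rw [norm_mul, norm_mul, norm_div, Complex.norm_I, Complex.norm_real, Complex.norm_real,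
        Real.norm_eq_abs, Real.norm_eq_abs, abs_of_nonneg (Real.sqrt_nonneg _)]
      have h2 : |Real.sin (rho k * t)| ≤ 1 := Real.abs_sin_le_one _
      have h3 : (0:ℝ) ≤ |Real.sin (rho k * t)| := abs_nonneg _
      have h4 := hsqpos k
      have h5 := hsq k
      rw [mul_pow, mul_pow, div_pow, one_pow, h5]
      have : |Real.sin (rho k * t)| ^ 2 ≤ 1 := by nlinarith
      have hn : (0:ℝ) ≤ ‖U.2 k‖ ^ 2 := sq_nonneg _
      calc 1 / (1 + (k:ℝ)^2) * |Real.sin (rho k * t)| ^ 2 * ‖U.2 k‖ ^ 2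
          ≤ 1 / (1 + (k:ℝ)^2) * 1 * ‖U.2 k‖ ^ 2 := by
            apply mul_le_mul_of_nonneg_right _ hn
            apply mul_le_mul_of_nonneg_left this (by positivity)
        _ = ‖U.2 k‖ ^ 2 / (1 + (k:ℝ)^2) := by ring
    have hws : (0:ℝ) ≤ (1 + (k:ℝ)^2) ^ s := (Real.rpow_pos_of_pos (hw k) s).le
    have key : (1 + (k:ℝ)^2) ^ s * ‖(Sflow t U).1 k‖ ^ 2
        ≤ (1 + (k:ℝ)^2) ^ s * (2 * ‖U.1 k‖ ^ 2 + 2 * (‖U.2 k‖ ^ 2 / (1 + (k:ℝ)^2))) := by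
      apply mul_le_mul_of_nonneg_left _ hws
      simp only [Sflow]
      nlinarith [hb, ha, hbnorm]
    calc (1 + (k:ℝ)^2) ^ s * ‖(Sflow t U).1 k‖ ^ 2
        ≤ (1 + (k:ℝ)^2) ^ s * (2 * ‖U.1 k‖ ^ 2 + 2 * (‖U.2 k‖ ^ 2 / (1 + (k:ℝ)^2))) := key
      _ = 2 * f1 k + 2 * f2 k := by
          simp only [hf1, hf2, hrw k]
          field_simp
  have h2 : ∀ k : ℤ, (1 + (k:ℝ)^2) ^ (s-1) * ‖(Sflow t U).2 k‖ ^ 2 ≤ 2 * f1 k + 2 * f2 k := by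
    intro k
    have hb := norm_add_sq_le_two
      (Complex.I * (Real.sqrt (1 + (k : ℝ) ^ 2) : ℂ) * (Real.sin (rho k * t) : ℂ) * U.1 k)
      ((Real.cos (rho k * t) : ℂ) * U.2 k)
    have ha : ‖(Real.cos (rho k * t) : ℂ) * U.2 k‖ ^ 2 ≤ ‖U.2 k‖ ^ 2 := by
      rw [norm_mul, Complex.norm_real, Real.norm_eq_abs, mul_pow]
      have hc : |Real.cos (rho k * t)| ^ 2 ≤ 1 := by
        nlinarith [Real.abs_cos_le_one (rho k * t), abs_nonneg (Real.cos (rho k * t))]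
      calc |Real.cos (rho k * t)| ^ 2 * ‖U.2 k‖ ^ 2 ≤ 1 * ‖U.2 k‖ ^ 2 :=
            mul_le_mul_of_nonneg_right hc (sq_nonneg _)
        _ = ‖U.2 k‖ ^ 2 := one_mul _
    have hbnorm : ‖Complex.I * (Real.sqrt (1 + (k : ℝ) ^ 2) : ℂ) * (Real.sin (rho k * t) : ℂ) * U.1 k‖ ^ 2
        ≤ (1 + (k:ℝ)^2) * ‖U.1 k‖ ^ 2 := by
      rw [norm_mul, norm_mul, norm_mul, Complex.norm_I, Complex.norm_real, Complex.norm_real,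
        one_mul, Real.norm_eq_abs, Real.norm_eq_abs, abs_of_nonneg (Real.sqrt_nonneg _)]
      rw [mul_pow, mul_pow, hsq k]
      have h2 : |Real.sin (rho k * t)| ≤ 1 := Real.abs_sin_le_one _
      have h3 : (0:ℝ) ≤ |Real.sin (rho k * t)| := abs_nonneg _
      have : |Real.sin (rho k * t)| ^ 2 ≤ 1 := by nlinarith
      have hm : (1+(k:ℝ)^2) * (|Real.sin (rho k * t)|^2 * ‖U.1 k‖^2)
          ≤ (1+(k:ℝ)^2) * (1 * ‖U.1 k‖^2) :=
        mul_le_mul_of_nonneg_left (mul_le_mul_of_nonneg_right this (sq_nonneg _)) (hw k).le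
      nlinarith [hm]
    have hws : (0:ℝ) ≤ (1 + (k:ℝ)^2) ^ (s-1) := (Real.rpow_pos_of_pos (hw k) _).le
    have key : (1 + (k:ℝ)^2) ^ (s-1) * ‖(Sflow t U).2 k‖ ^ 2
        ≤ (1 + (k:ℝ)^2) ^ (s-1) * (2 * ((1 + (k:ℝ)^2) * ‖U.1 k‖ ^ 2) + 2 * ‖U.2 k‖ ^ 2) := by
      apply mul_le_mul_of_nonneg_left _ hws
      simp only [Sflow]
      nlinarith [hb, ha, hbnorm]
    calc (1 + (k:ℝ)^2) ^ (s-1) * ‖(Sflow t U).2 k‖ ^ 2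
        ≤ (1 + (k:ℝ)^2) ^ (s-1) * (2 * ((1 + (k:ℝ)^2) * ‖U.1 k‖ ^ 2) + 2 * ‖U.2 k‖ ^ 2) := key
      _ = 2 * f1 k + 2 * f2 k := by
          simp only [hf1, hf2, hrw k]
          field_simp
  -- summability
  have hRHS : Summable (fun k : ℤ => 2 * f1 k + 2 * f2 k) := (hu.mul_left 2).add (hv.mul_left 2)
  have hg1pos : ∀ k : ℤ, (0:ℝ) ≤ (1 + (k:ℝ)^2) ^ s * ‖(Sflow t U).1 k‖ ^ 2 := by
    intro k; positivity
  have hg2pos : ∀ k : ℤ, (0:ℝ) ≤ (1 + (k:ℝ)^2) ^ (s-1) * ‖(Sflow t U).2 k‖ ^ 2 := by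
    intro k; positivity
  have hS1 : Summable (fun k : ℤ => (1 + (k:ℝ)^2) ^ s * ‖(Sflow t U).1 k‖ ^ 2) :=
    Summable.of_nonneg_of_le hg1pos h1 hRHS
  have hS2 : Summable (fun k : ℤ => (1 + (k:ℝ)^2) ^ (s-1) * ‖(Sflow t U).2 k‖ ^ 2) :=
    Summable.of_nonneg_of_le hg2pos h2 hRHS
  have hsum1 : ∑' k : ℤ, (1 + (k:ℝ)^2) ^ s * ‖(Sflow t U).1 k‖ ^ 2
      ≤ 2 * (∑' k, f1 k) + 2 * (∑' k, f2 k) := by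
    calc ∑' k : ℤ, (1 + (k:ℝ)^2) ^ s * ‖(Sflow t U).1 k‖ ^ 2
        ≤ ∑' k : ℤ, (2 * f1 k + 2 * f2 k) := Summable.tsum_le_tsum h1 hS1 hRHS
      _ = 2 * (∑' k, f1 k) + 2 * (∑' k, f2 k) := by
          rw [Summable.tsum_add (hu.mul_left 2) (hv.mul_left 2), tsum_mul_left, tsum_mul_left]
  have hsum2 : ∑' k : ℤ, (1 + (k:ℝ)^2) ^ (s-1) * ‖(Sflow t U).2 k‖ ^ 2
      ≤ 2 * (∑' k, f1 k) + 2 * (∑' k, f2 k) := by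
    calc ∑' k : ℤ, (1 + (k:ℝ)^2) ^ (s-1) * ‖(Sflow t U).2 k‖ ^ 2
        ≤ ∑' k : ℤ, (2 * f1 k + 2 * f2 k) := Summable.tsum_le_tsum h2 hS2 hRHS
      _ = 2 * (∑' k, f1 k) + 2 * (∑' k, f2 k) := by
          rw [Summable.tsum_add (hu.mul_left 2) (hv.mul_left 2), tsum_mul_left, tsum_mul_left]
  -- unfold norms
  have tnn : ∀ (g : ℤ → ℝ), (∀ k, 0 ≤ g k) → (0:ℝ) ≤ ∑' k, g k :=
    fun g hg => tsum_nonneg hg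
  have hf1nn : ∀ k, (0:ℝ) ≤ f1 k := fun k => by simp only [hf1]; positivity
  have hf2nn : ∀ k, (0:ℝ) ≤ f2 k := fun k => by simp only [hf2]; positivity
  have hsN : ∀ (s' : ℝ) (g : ℤ → ℂ), hsNorm s' g ^ 2 = ∑' k : ℤ, (1 + (k:ℝ)^2) ^ s' * ‖g k‖ ^ 2 := by
    intro s' g
    apply Real.sq_sqrt
    exact tsum_nonneg fun k => by positivity
  rw [xsNorm, xsNorm, hsN, hsN, hsN, hsN]
  have hA : (0:ℝ) ≤ ∑' k, f1 k := tnn _ hf1nn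
  have hB : (0:ℝ) ≤ ∑' k, f2 k := tnn _ hf2nn
  have step : (∑' k : ℤ, (1 + (k:ℝ)^2) ^ s * ‖(Sflow t U).1 k‖ ^ 2)
      + (∑' k : ℤ, (1 + (k:ℝ)^2) ^ (s-1) * ‖(Sflow t U).2 k‖ ^ 2)
      ≤ 4 * ((∑' k, f1 k) + (∑' k, f2 k)) := by linarith
  calc Real.sqrt ((∑' k : ℤ, (1 + (k:ℝ)^2) ^ s * ‖(Sflow t U).1 k‖ ^ 2)
      + (∑' k : ℤ, (1 + (k:ℝ)^2) ^ (s-1) * ‖(Sflow t U).2 k‖ ^ 2))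
      ≤ Real.sqrt (4 * ((∑' k, f1 k) + (∑' k, f2 k))) := Real.sqrt_le_sqrt step
    _ = 2 * Real.sqrt ((∑' k, f1 k) + (∑' k, f2 k)) := by
        rw [show (4:ℝ) = 2^2 by norm_num, Real.sqrt_mul (by positivity), Real.sqrt_sq (by norm_num)]
end
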